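/- arXiv:1504.03372 — 10 statements merged into one kernel-verified Lean document; each statement's English description precedes it below -/
import Mathlib

section
/- Let (X, ≤) be a countable lower 1-transitive linear order and let s be an invariant partition of X (an equivalence relation whose classes are convex and which is preserved by every order isomorphism between initial segments). Then the quotient X/s admits a linear order making the quotient map monotone, and with this induced order X/s is a countable lower 1-transitive linear order. -/
/-- A linear order is lower 1-transitive if any two of its initial segments
are order-isomorphic. -/
def LowerOneTransitive (X : Type*) [LinearOrder X] : Prop :=
  ∀ a b : X, Nonempty (Set.Iic a ≃o Set.Iic b)

/-- An invariant partition: an equivalence relation with convex classes which is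
preserved by every order isomorphism between initial segments. -/
def IsInvariantPartition {X : Type*} [LinearOrder X] (s : Setoid X) : Prop :=
  (∀ x y z : X, s.r x y → x ≤ z → z ≤ y → s.r z x) ∧
  (∀ (a b : X) (f : Set.Iic a ≃o Set.Iic b) (x y : Set.Iic a),
    s.r (x : X) (y : X) ↔ s.r ((f x : X)) ((f y : X)))

/-!
Since the classes are convex, the quotient carries Mathlib's condensation order
`Quotient.instLinearOrder`, in which `⟦x⟧ < ⟦y⟧ ↔ x < y ∧ ¬ x ≈ y`. Every class below `⟦a⟧` has a
representative below `a`, so an isomorphism `f : Iic a ≃o Iic b` descends to `⟦x⟧ ↦ ⟦f x⟧` on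
`Iic ⟦a⟧`: well defined and strictly monotone because `f` preserves and reflects `≈`, and onto
because `f` is.
-/

open Set

theorem Setoid.ordConnected_mk_preimage {X : Type*} [LinearOrder X] {s : Setoid X}
    (hconv : ∀ x y z : X, s.r x y → x ≤ z → z ≤ y → s.r z x) (c : Quotient s) :
    (Quotient.mk s ⁻¹' {c}).OrdConnected :=
  ⟨fun x hx y hy z hz =>
    (Quotient.sound (hconv x y z (Quotient.exact (hx.trans hy.symm)) hz.1 hz.2)).trans hx⟩

namespace Quotient

variable {X : Type*} [LinearOrder X] {s : Setoid X}

def iicMk (a : X) (x : Iic a) : Iic (Quotient.mk s a) :=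
  ⟨Quotient.mk s x, mk_monotone x.2⟩

variable [∀ c, OrdConnected (Quotient.mk s ⁻¹' {c})]

theorem iicMk_surjective (a : X) : Function.Surjective (iicMk (s := s) a) := by
  rintro ⟨c, hc⟩
  induction c using Quotient.inductionOn with | h x
  rcases mk_le_mk.1 hc with hxa | hxa
  · exact ⟨⟨x, hxa⟩, rfl⟩
  · exact ⟨⟨a, le_rfl⟩, Subtype.ext (Quotient.sound (Setoid.symm hxa))⟩

theorem iicMk_lt_iicMk {a : X} {x y : Iic a} :
    iicMk (s := s) a x < iicMk a y ↔ x < y ∧ ¬ (x : X) ≈ y :=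
  mk_lt_mk

variable {a b : X} (f : Iic a ≃o Iic b)

noncomputable def iicMap : Iic (Quotient.mk s a) → Iic (Quotient.mk s b) :=
  iicMk b ∘ f ∘ Function.surjInv (iicMk_surjective a)

variable {f}

theorem iicMap_iicMk (hf : ∀ x y : Iic a, (x : X) ≈ y ↔ (f x : X) ≈ f y) (x : Iic a) :
    iicMap (s := s) f (iicMk a x) = iicMk b (f x) := by
  have hx : ((Function.surjInv (iicMk_surjective a) (iicMk a x) : Iic a) : X) ≈ x :=
    Quotient.exact (congrArg Subtype.val (Function.surjInv_eq (iicMk_surjective a) _))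
  exact Subtype.ext (Quotient.sound ((hf _ _).1 hx))

theorem iicMap_strictMono (hf : ∀ x y : Iic a, (x : X) ≈ y ↔ (f x : X) ≈ f y) :
    StrictMono (iicMap (s := s) f) := by
  intro c d hcd
  obtain ⟨x, rfl⟩ := iicMk_surjective a c
  obtain ⟨y, rfl⟩ := iicMk_surjective a d
  obtain ⟨hxy, hnot⟩ := iicMk_lt_iicMk.1 hcd
  rw [iicMap_iicMk hf, iicMap_iicMk hf]
  exact iicMk_lt_iicMk.2 ⟨f.strictMono hxy, fun h => hnot ((hf x y).2 h)⟩

theorem iicMap_surjective (hf : ∀ x y : Iic a, (x : X) ≈ y ↔ (f x : X) ≈ f y) :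
    Function.Surjective (iicMap (s := s) f) := by
  intro d
  obtain ⟨y, rfl⟩ := iicMk_surjective b d
  exact ⟨iicMk a (f.symm y), by rw [iicMap_iicMk hf, f.apply_symm_apply]⟩

noncomputable def iicOrderIso [DecidableRel (· ≈ · : X → X → Prop)]
    (hf : ∀ x y : Iic a, (x : X) ≈ y ↔ (f x : X) ≈ f y) :
    Iic (Quotient.mk s a) ≃o Iic (Quotient.mk s b) :=
  (iicMap_strictMono hf).orderIsoOfSurjective _ (iicMap_surjective hf)

end Quotient

/-- The quotient of a countable lower 1-transitive linear order by an invariant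
partition admits a linear order making the quotient map monotone, and with it the
quotient is a countable lower 1-transitive linear order. -/
theorem quotient_lowerOneTransitive {X : Type*} [LinearOrder X] [Countable X]
    (hX : LowerOneTransitive X) (s : Setoid X) (hs : IsInvariantPartition s) :
    ∃ li : LinearOrder (Quotient s),
      (@Monotone X (Quotient s) _ li.toPreorder (Quotient.mk s)) ∧
      Countable (Quotient s) ∧
      @LowerOneTransitive (Quotient s) li := by
  classical
  obtain ⟨hconv, hinv⟩ := hs
  have := Setoid.ordConnected_mk_preimage hconv
  refine ⟨Quotient.instLinearOrder, Quotient.mk_monotone, inferInstance, ?_⟩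
  intro c d
  induction c, d using Quotient.inductionOn₂ with | h a b
  obtain ⟨f⟩ := hX a b
  exact ⟨Quotient.iicOrderIso (hinv a b f)⟩
end

section
/- Let (X, ≤) be a lower 1-transitive linear order and let s₁ and s₂ be two nontrivial invariant partitions of X. Then s₁ refines s₂ or s₂ refines s₁ (i.e. (∀ x y, x ∼₁ y → x ∼₂ y) or (∀ x y, x ∼₂ y → x ∼₁ y)); moreover, if s₁ ≠ s₂, then s₁ and s₂ have no equivalence class in common, i.e. there is no a ∈ X with {x : x ∼₁ a} = {x : x ∼₂ a}. -/
/-- An invariant partition is nontrivial if not all classes are singletons and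
there is more than one class. -/
def IsNontrivialPartition {X : Type*} (s : Setoid X) : Prop :=
  (∃ x y : X, x ≠ y ∧ s.r x y) ∧ (∃ x y : X, ¬ s.r x y)

/-!
Write `C_s(a) = {x ≤ a | x ∼ₛ a}` for the part of the `s`-class of `a` below `a`. By convexity,
the two sets `C_{s₁}(a)` and `C_{s₂}(a)` are nested. An isomorphism `Iic b ≃o Iic a` fixes the
tops and respects both partitions, so it carries `C_s(b)` onto `C_s(a)`; by lower 1-transitivity
the direction of the inclusion is therefore the same at every point. Since an equivalence
relation on a linear order is determined by the sets `C_s(a)`, one partition refines the other,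
and if the two partitions share one class, they agree at one point and hence everywhere.
-/

namespace Setoid

variable {X : Type*} [LinearOrder X]

def lowerClass (s : Setoid X) (a : X) : Set X := {x | x ≤ a ∧ s x a}

theorem le_of_forall_lowerClass_subset {s t : Setoid X}
    (h : ∀ a, s.lowerClass a ⊆ t.lowerClass a) : s ≤ t := by
  intro x y hxy
  rcases le_total x y with hle | hle
  · exact (h y ⟨hle, hxy⟩).2
  · exact t.symm (h x ⟨hle, s.symm hxy⟩).2

end Setoid

namespace IsInvariantPartition

open Setoid

variable {X : Type*} [LinearOrder X]

theorem lowerClass_subset_or_subset {s t : Setoid X}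
    (hs : IsInvariantPartition s) (ht : IsInvariantPartition t) (a : X) :
    s.lowerClass a ⊆ t.lowerClass a ∨ t.lowerClass a ⊆ s.lowerClass a := by
  by_contra! h
  obtain ⟨⟨x, ⟨hxa, hxs⟩, hxt⟩, ⟨y, ⟨hya, hyt⟩, hys⟩⟩ :=
    And.intro (Set.not_subset.mp h.1) (Set.not_subset.mp h.2)
  rcases le_total x y with hxy | hyx
  · exact hys ⟨hya, s.trans (hs.1 x a y hxs hxy hya) hxs⟩
  · exact hxt ⟨hxa, t.trans (ht.1 y a x hyt hyx hxa) hyt⟩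

theorem rel_top_iff {s : Setoid X} (hs : IsInvariantPartition s)
    {a b : X} (f : Set.Iic a ≃o Set.Iic b) (x : Set.Iic a) :
    s x a ↔ s (f x) b := by
  simpa using hs.2 a b f x ⊤

theorem lowerClass_subset_of_lowerClass_subset (hX : LowerOneTransitive X)
    {s t : Setoid X} (hs : IsInvariantPartition s) (ht : IsInvariantPartition t) {a : X}
    (h : s.lowerClass a ⊆ t.lowerClass a) (b : X) : s.lowerClass b ⊆ t.lowerClass b := by
  obtain ⟨f⟩ := hX b a
  rintro x ⟨hxb, hxs⟩
  have hfx : (f ⟨x, hxb⟩ : X) ∈ s.lowerClass a :=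
    ⟨(f ⟨x, hxb⟩).2, (hs.rel_top_iff f ⟨x, hxb⟩).mp hxs⟩
  exact ⟨hxb, (ht.rel_top_iff f ⟨x, hxb⟩).mpr (h hfx).2⟩

theorem le_of_lowerClass_subset (hX : LowerOneTransitive X)
    {s t : Setoid X} (hs : IsInvariantPartition s) (ht : IsInvariantPartition t) {a : X}
    (h : s.lowerClass a ⊆ t.lowerClass a) : s ≤ t :=
  le_of_forall_lowerClass_subset (hs.lowerClass_subset_of_lowerClass_subset hX ht h)

theorem le_total (hX : LowerOneTransitive X) {s t : Setoid X}
    (hs : IsInvariantPartition s) (ht : IsInvariantPartition t) : s ≤ t ∨ t ≤ s := by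
  rcases isEmpty_or_nonempty X with _ | ⟨⟨a⟩⟩
  · exact Or.inl fun x => isEmptyElim x
  rcases hs.lowerClass_subset_or_subset ht a with h | h
  exacts [Or.inl (hs.le_of_lowerClass_subset hX ht h),
    Or.inr (ht.le_of_lowerClass_subset hX hs h)]

end IsInvariantPartition

theorem invariantPartition_comparable_general {X : Type*} [LinearOrder X]
    (hX : LowerOneTransitive X) (s₁ s₂ : Setoid X)
    (h₁ : IsInvariantPartition s₁) (h₂ : IsInvariantPartition s₂) :
    ((∀ x y : X, s₁.r x y → s₂.r x y) ∨ (∀ x y : X, s₂.r x y → s₁.r x y)) ∧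
    (s₁ ≠ s₂ → ¬ ∃ a : X, {x : X | s₁.r x a} = {x : X | s₂.r x a}) := by
  refine ⟨?_, fun hne ⟨a, hclass⟩ => hne ?_⟩
  · rcases h₁.le_total hX h₂ with h | h
    exacts [Or.inl fun _ _ hxy => h hxy, Or.inr fun _ _ hxy => h hxy]
  · have hlower : s₁.lowerClass a = s₂.lowerClass a := by
      ext x
      simpa [Setoid.lowerClass] using fun _ : x ≤ a => Set.ext_iff.mp hclass x
    exact le_antisymm (h₁.le_of_lowerClass_subset hX h₂ hlower.subset)
      (h₂.le_of_lowerClass_subset hX h₁ hlower.superset)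

/-- Of two nontrivial invariant partitions of a lower 1-transitive linear order, one
refines the other; moreover distinct invariant partitions share no class. -/
theorem invariantPartition_comparable {X : Type*} [LinearOrder X]
    (hX : LowerOneTransitive X) (s₁ s₂ : Setoid X)
    (h₁ : IsInvariantPartition s₁) (h₂ : IsInvariantPartition s₂)
    (hn₁ : IsNontrivialPartition s₁) (hn₂ : IsNontrivialPartition s₂) :
    ((∀ x y : X, s₁.r x y → s₂.r x y) ∨ (∀ x y : X, s₂.r x y → s₁.r x y)) ∧
    (s₁ ≠ s₂ → ¬ ∃ a : X, {x : X | s₁.r x a} = {x : X | s₂.r x a}) :=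
  invariantPartition_comparable_general hX s₁ s₂ h₁ h₂
end

section
/- Let (X, ≤) be a lower 1-transitive linear order and let s be an invariant partition of X. Then each equivalence class of s, regarded as a suborder of X, is lower 1-transitive, and any two equivalence classes are lower isomorphic as suborders: for all x, y ∈ X, the suborders {z ∈ X : z ∼ x and z ≤ x} and {w ∈ X : w ∼ y and w ≤ y} are order-isomorphic. -/
def OrderIso.subtypeEquiv {α β : Type*} [LE α] [LE β] {p : α → Prop} {q : β → Prop}
    (f : α ≃o β) (h : ∀ a, p a ↔ q (f a)) : {a // p a} ≃o {b // q b} where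
  toEquiv := f.toEquiv.subtypeEquiv h
  map_rel_iff' := f.le_iff_le

def Set.Iic.subtypeOrderIso {α : Type*} [Preorder α] (a : α) (p : α → Prop) :
    {z : Set.Iic a // p z} ≃o {z | p z ∧ z ≤ a} where
  toFun z := ⟨z, z.2, z.1.2⟩
  invFun z := ⟨⟨z, z.2.2⟩, z.2.1⟩
  left_inv _ := rfl
  right_inv _ := rfl
  map_rel_iff' := Iff.rfl

theorem IsInvariantPartition.rel_top_iff_s3 {X : Type*} [LinearOrder X] {s : Setoid X}
    (hs : IsInvariantPartition s) {a b : X} (f : Set.Iic a ≃o Set.Iic b) (z : Set.Iic a) :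
    s.r z a ↔ s.r (f z) b := by
  simpa [f.map_top] using hs.2 a b f z ⊤

/-- The classes of an invariant partition of a lower 1-transitive linear order are
lower 1-transitive and pairwise lower isomorphic: for all `x y : X`, the suborders
`{z | z ∼ x ∧ z ≤ x}` and `{w | w ∼ y ∧ w ≤ y}` are order-isomorphic. -/
theorem invariantPartition_classes_lowerIsomorphic {X : Type*} [LinearOrder X]
    (hX : LowerOneTransitive X) (s : Setoid X) (hs : IsInvariantPartition s) :
    ∀ x y : X,
      Nonempty ({z : X | s.r z x ∧ z ≤ x} ≃o {w : X | s.r w y ∧ w ≤ y}) := by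
  intro x y
  obtain ⟨f⟩ := hX x y
  exact ⟨(Set.Iic.subtypeOrderIso x _).symm.trans
    ((f.subtypeEquiv (hs.rel_top_iff_s3 f)).trans (Set.Iic.subtypeOrderIso y _))⟩
end

section
/- If A is a lower 1-transitive linear order, then the lexicographic product ℤ.A, ordered lexicographically with ℤ as the major coordinate, is lower 1-transitive. -/
private theorem lowerOneTransitive_intMul_aux {A : Type*} [LinearOrder A]
    (m n : ℤ) (a b : A) (f : Set.Iic a ≃o Set.Iic b) :
    Nonempty (Set.Iic (toLex (m, a) : ℤ ×ₗ A) ≃o Set.Iic (toLex (n, b) : ℤ ×ₗ A)) := by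
  set d := n - m with hd
  set F : ℤ ×ₗ A → ℤ ×ₗ A := fun x =>
    if (ofLex x).1 < m then toLex ((ofLex x).1 + d, (ofLex x).2)
    else toLex (n, (f ⟨min (ofLex x).2 a, min_le_right _ _⟩ : Set.Iic b).1) with hF
  have hdom : ∀ x : ℤ ×ₗ A, x ≤ toLex (m, a) →
      (ofLex x).1 < m ∨ ((ofLex x).1 = m ∧ (ofLex x).2 ≤ a) := by
    intro x hx
    exact (Prod.Lex.le_iff).mp hx
  have hmem : ∀ x : ℤ ×ₗ A, x ≤ toLex (m, a) → F x ≤ toLex (n, b) := by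
    intro x hx
    by_cases h : (ofLex x).1 < m
    · simp only [hF, if_pos h]
      exact (Prod.Lex.le_iff).mpr (Or.inl (by simp only [ofLex_toLex]; omega))
    · simp only [hF, if_neg h]
      exact (Prod.Lex.le_iff).mpr (Or.inr ⟨rfl, (f _).2⟩)
  set G : Set.Iic (toLex (m, a) : ℤ ×ₗ A) → Set.Iic (toLex (n, b) : ℤ ×ₗ A) :=
    fun x => ⟨F x.1, hmem x.1 x.2⟩ with hG
  have hsm : StrictMono G := by
    rintro ⟨x, hx⟩ ⟨y, hy⟩ hxy
    have hxy' := (Prod.Lex.lt_iff).mp (show (toLex (ofLex x) : ℤ ×ₗ A) < toLex (ofLex y) from hxy)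
    simp only [hG, Subtype.mk_lt_mk, hF]
    rcases hxy' with h1 | ⟨h1, h2⟩
    · by_cases hy1 : (ofLex y).1 < m
      · have hx1 : (ofLex x).1 < m := lt_trans h1 hy1
        simp only [if_pos hx1, if_pos hy1]
        exact (Prod.Lex.lt_iff).mpr (Or.inl (by simp only [ofLex_toLex] at h1 ⊢; omega))
      · have hy1' : (ofLex y).1 = m := ((hdom y hy).resolve_left hy1).1
        have hx1 : (ofLex x).1 < m := h1.trans_le hy1'.le
        simp only [if_pos hx1, if_neg hy1]
        exact (Prod.Lex.lt_iff).mpr (Or.inl (by simp only [ofLex_toLex] at h1 ⊢; omega))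
    · by_cases hx1 : (ofLex x).1 < m
      · have hy1 : (ofLex y).1 < m := h1 ▸ hx1
        simp only [if_pos hx1, if_neg (lt_irrefl _), if_pos hy1]
        exact (Prod.Lex.lt_iff).mpr (Or.inr ⟨by simp only [ofLex_toLex] at h1 ⊢; omega, h2⟩)
      · have hy1 : ¬ (ofLex y).1 < m := h1 ▸ hx1
        have hxa : (ofLex x).2 ≤ a := ((hdom x hx).resolve_left hx1).2
        have hya : (ofLex y).2 ≤ a := ((hdom y hy).resolve_left hy1).2
        simp only [if_neg hx1, if_neg hy1]
        refine (Prod.Lex.lt_iff).mpr (Or.inr ⟨rfl, ?_⟩)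
        have : (⟨min (ofLex x).2 a, min_le_right _ _⟩ : Set.Iic a) <
            ⟨min (ofLex y).2 a, min_le_right _ _⟩ := by
          simpa [Subtype.mk_lt_mk, min_eq_left hxa, min_eq_left hya] using h2
        exact Subtype.coe_lt_coe.mpr (f.lt_iff_lt.mpr this)
  have hsurj : Function.Surjective G := by
    rintro ⟨y, hy⟩
    rcases (Prod.Lex.le_iff).mp hy with h1 | ⟨h1, h2⟩
    · have h1' : (ofLex y).1 < n := h1
      refine ⟨⟨toLex ((ofLex y).1 - d, (ofLex y).2), ?_⟩, ?_⟩
      · exact (Prod.Lex.le_iff).mpr (Or.inl (by simp; omega))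
      · have hlt : ((ofLex (toLex (((ofLex y).1 - d : ℤ), (ofLex y).2))).1) < m := by
          simp; omega
        simp only [hG, hF, Subtype.mk_eq_mk, if_pos hlt]
        have : (ofLex y).1 - d + d = (ofLex y).1 := by omega
        simp only [ofLex_toLex]
        rw [show (ofLex y).1 - d + d = (ofLex y).1 by omega]
        rfl
    · set c := f.symm ⟨(ofLex y).2, h2⟩ with hc
      refine ⟨⟨toLex (m, (c : A)), ?_⟩, ?_⟩
      · exact (Prod.Lex.le_iff).mpr (Or.inr ⟨rfl, c.2⟩)
      · have hlt : ¬ ((ofLex (toLex ((m : ℤ), (c : A)))).1 < m) := by simp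
        simp only [hG, hF, Subtype.mk_eq_mk, if_neg hlt, ofLex_toLex]
        have hmin : min (c : A) a = (c : A) := min_eq_left c.2
        have : (f ⟨min (c : A) a, min_le_right _ _⟩ : Set.Iic b) = ⟨(ofLex y).2, h2⟩ := by
          rw [show (⟨min (c : A) a, min_le_right _ _⟩ : Set.Iic a) = c by
            ext; simp [hmin]]
          simp [hc]
        rw [this]
        simp only [if_neg (lt_irrefl m)]
        have h1' : (ofLex y).1 = n := h1
        rw [← h1']
        simp
  exact ⟨(hsm.orderIsoOfSurjective G hsurj)⟩

/-- If `A` is lower 1-transitive, then ℤ.A = ℤ ×ₗ A is lower 1-transitive. -/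
theorem lowerOneTransitive_intMul {A : Type*} [LinearOrder A]
    (hA : LowerOneTransitive A) : LowerOneTransitive (ℤ ×ₗ A) := by
  intro p q
  obtain ⟨f⟩ := hA (ofLex p).2 (ofLex q).2
  exact lowerOneTransitive_intMul_aux (ofLex p).1 (ofLex q).1 (ofLex p).2 (ofLex q).2 f
end

section
/- Let Q be a countable linear order with no least and no greatest element, let I be a nonempty set, and let c : Q → I be a coloring such that for all q < q' in Q and every i ∈ I there exists r with q < r < q' and c r = i. Let (Y i)_{i ∈ I} be a family of linear orders that are pairwise lower isomorphic (including each lower isomorphic to itself). Then the lexicographic sum Σₗ (q : Q), Y (c q) — the sigma type Σ q, Y (c q) with the lexicographic order — is lower 1-transitive. (This is the order denoted ℚ_n(Y₀, …, Y_{n−1}) in the paper.) -/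
/-- Two linear orders are lower isomorphic if any two initial segments
(one from each) are order-isomorphic. -/
def LowerIsomorphic (X Y : Type*) [LinearOrder X] [LinearOrder Y] : Prop :=
  ∀ (a : X) (b : Y), Nonempty (Set.Iic a ≃o Set.Iic b)


/-!
Write `a = ⟨q, y⟩`. The initial segment `Iic a` of `Σₗ q, Y (c q)` is the lexicographic sum of
the fibres over `Iio q`, followed by `Iic y`. For any two `q, q'`, the orders `Iio q` and `Iio q'`
are countable, without endpoints, and every colour is dense in them, so a colour-preserving
back-and-forth argument gives an order isomorphism `Iio q ≃o Iio q'` respecting `c`; it identifies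
the first summands fibre by fibre. The second summands `Iic y` and `Iic y'` are isomorphic because
the `Y i` are pairwise lower isomorphic.
-/

open Set

section DenseColoring

variable {α β I : Type*} [LinearOrder α] [LinearOrder β]

def IsDenseColoring (c : α → I) : Prop :=
  ∀ x y, x < y → ∀ i, ∃ z, x < z ∧ z < y ∧ c z = i

namespace IsDenseColoring

variable {c : α → I}

theorem denselyOrdered (hc : IsDenseColoring c) : DenselyOrdered α :=
  ⟨fun x y hxy => let ⟨z, hxz, hzy, _⟩ := hc x y hxy (c x); ⟨z, hxz, hzy⟩⟩

theorem restrict (hc : IsDenseColoring c) (s : Set α) [hs : s.OrdConnected] :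
    IsDenseColoring (s.domRestrict c) := by
  intro x y hxy i
  obtain ⟨z, hxz, hzy, hz⟩ := hc x y hxy i
  exact ⟨⟨z, hs.out x.2 y.2 ⟨hxz.le, hzy.le⟩⟩, hxz, hzy, hz⟩

theorem exists_between_finsets [NoMinOrder α] [NoMaxOrder α] [Nonempty α]
    (hc : IsDenseColoring c) (lo hi : Finset α) (lo_lt_hi : ∀ x ∈ lo, ∀ y ∈ hi, x < y) (i : I) :
    ∃ m, c m = i ∧ (∀ x ∈ lo, x < m) ∧ ∀ y ∈ hi, m < y := by
  have := hc.denselyOrdered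
  obtain ⟨m, lo_lt_m, m_lt_hi⟩ := Order.exists_between_finsets lo hi lo_lt_hi
  obtain ⟨m', lo_lt_m', m'_lt_m⟩ :=
    Order.exists_between_finsets lo {m} (by simpa only [Finset.mem_singleton, forall_eq])
  obtain ⟨z, hm'z, hzm, hz⟩ := hc m' m (m'_lt_m m (Finset.mem_singleton_self m)) i
  exact ⟨z, hz, fun x hx => (lo_lt_m' x hx).trans hm'z, fun y hy => hzm.trans (m_lt_hi y hy)⟩

end IsDenseColoring

section BackAndForth

variable (cA : α → I) (cB : β → I)

/-- Colour-preserving finite partial isomorphisms, encoded by their graphs as in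
`Order.PartialIso`. -/
def ColoredPartialIso : Type _ :=
  { f : Finset (α × β) //
    (∀ p ∈ f, cB p.2 = cA p.1) ∧ ∀ p ∈ f, ∀ q ∈ f, cmp p.1 q.1 = cmp p.2 q.2 }

namespace ColoredPartialIso

instance : Preorder (ColoredPartialIso cA cB) := Subtype.preorder _

instance : Inhabited (ColoredPartialIso cA cB) := ⟨⟨∅, by simp⟩⟩

variable {cA cB}

protected def comm (f : ColoredPartialIso cA cB) : ColoredPartialIso cB cA :=
  ⟨f.1.image Prod.swap, by
    simp only [Finset.forall_mem_image, Prod.fst_swap, Prod.snd_swap]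
    exact ⟨fun p hp => (f.2.1 p hp).symm, fun p hp q hq => (f.2.2 p hp q hq).symm⟩⟩

@[simp]
theorem mem_comm {f : ColoredPartialIso cA cB} {a : α} {b : β} :
    (b, a) ∈ f.comm.1 ↔ (a, b) ∈ f.1 := by
  simp [ColoredPartialIso.comm]

theorem exists_across [NoMinOrder β] [NoMaxOrder β] [Nonempty β] (hcB : IsDenseColoring cB)
    (f : ColoredPartialIso cA cB) (a : α) :
    ∃ b, cB b = cA a ∧ ∀ p ∈ f.1, cmp p.1 a = cmp p.2 b := by
  by_cases h : ∃ b, (a, b) ∈ f.1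
  · obtain ⟨b, hb⟩ := h
    exact ⟨b, f.2.1 _ hb, fun p hp => f.2.2 p hp _ hb⟩
  set lo := (f.1.filter (·.1 < a)).image Prod.snd
  set hi := (f.1.filter (a < ·.1)).image Prod.snd
  have lo_lt_hi : ∀ x ∈ lo, ∀ y ∈ hi, x < y := by
    simp only [lo, hi, Finset.forall_mem_image, Finset.mem_filter, and_imp]
    intro p hp hpa q hq haq
    exact (lt_iff_lt_of_cmp_eq_cmp (f.2.2 p hp q hq)).1 (hpa.trans haq)
  obtain ⟨b, hb, lo_lt_b, b_lt_hi⟩ := hcB.exists_between_finsets lo hi lo_lt_hi (cA a)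
  refine ⟨b, hb, ?_⟩
  rintro ⟨a', b'⟩ hp
  have ha' : a' ≠ a := fun e => h ⟨b', e ▸ hp⟩
  rcases ha'.lt_or_gt with ha' | ha'
  · have hb' : b' < b := lo_lt_b b' (Finset.mem_image_of_mem _ (Finset.mem_filter.2 ⟨hp, ha'⟩))
    exact ((cmp_eq_lt_iff _ _).2 ha').trans ((cmp_eq_lt_iff _ _).2 hb').symm
  · have hb' : b < b' := b_lt_hi b' (Finset.mem_image_of_mem _ (Finset.mem_filter.2 ⟨hp, ha'⟩))
    exact ((cmp_eq_gt_iff _ _).2 ha').trans ((cmp_eq_gt_iff _ _).2 hb').symm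

variable (cA) in
def definedAtLeft [NoMinOrder β] [NoMaxOrder β] [Nonempty β] (hcB : IsDenseColoring cB)
    (a : α) : Order.Cofinal (ColoredPartialIso cA cB) where
  carrier := {f | ∃ b, (a, b) ∈ f.1}
  isCofinal f := by
    obtain ⟨b, hb, a_b⟩ := exists_across hcB f a
    refine ⟨⟨insert (a, b) f.1, ?_, ?_⟩, ⟨b, Finset.mem_insert_self _ _⟩, Finset.subset_insert _ _⟩
    · simpa only [Finset.forall_mem_insert] using ⟨hb, f.2.1⟩
    · simp only [Finset.forall_mem_insert, cmp_self_eq_eq, true_and]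
      exact ⟨fun q hq => cmp_eq_cmp_symm.1 (a_b q hq), fun p hp => ⟨a_b p hp, f.2.2 p hp⟩⟩

variable (cB) in
def definedAtRight [NoMinOrder α] [NoMaxOrder α] [Nonempty α] (hcA : IsDenseColoring cA)
    (b : β) : Order.Cofinal (ColoredPartialIso cA cB) where
  carrier := {f | ∃ a, (a, b) ∈ f.1}
  isCofinal f := by
    obtain ⟨g, ⟨a, ha⟩, hfg⟩ := (definedAtLeft cB hcA b).isCofinal f.comm
    refine ⟨g.comm, ⟨a, mem_comm.2 ha⟩, fun ⟨a', b'⟩ h => mem_comm.2 (hfg (mem_comm.2 h))⟩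

end ColoredPartialIso

end BackAndForth

theorem exists_orderIso_of_isDenseColoring [Countable α] [Countable β]
    [NoMinOrder α] [NoMaxOrder α] [Nonempty α] [NoMinOrder β] [NoMaxOrder β] [Nonempty β]
    {cA : α → I} {cB : β → I} (hcA : IsDenseColoring cA) (hcB : IsDenseColoring cB) :
    ∃ e : α ≃o β, ∀ a, cB (e a) = cA a := by
  cases nonempty_encodable α
  cases nonempty_encodable β
  let cofinals : α ⊕ β → Order.Cofinal (ColoredPartialIso cA cB) :=
    Sum.elim (ColoredPartialIso.definedAtLeft cA hcB) (ColoredPartialIso.definedAtRight cB hcA)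
  let ideal := Order.idealOfCofinals default cofinals
  have hF : ∀ a, ∃ b, ∃ f ∈ ideal, (a, b) ∈ f.1 := fun a =>
    let ⟨f, ⟨b, hb⟩, hf⟩ := Order.cofinal_meets_idealOfCofinals default cofinals (.inl a)
    ⟨b, f, hf, hb⟩
  have hG : ∀ b, ∃ a, ∃ f ∈ ideal, (a, b) ∈ f.1 := fun b =>
    let ⟨f, ⟨a, ha⟩, hf⟩ := Order.cofinal_meets_idealOfCofinals default cofinals (.inr b)
    ⟨a, f, hf, ha⟩
  choose F f hf haF using hF
  choose G g hg hGb using hG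
  have cmp_G_eq : ∀ a b, cmp a (G b) = cmp (F a) b := fun a b =>
    let ⟨m, _, hfm, hgm⟩ := ideal.directed _ (hf a) _ (hg b)
    m.2.2 _ (hfm (haF a)) _ (hgm (hGb b))
  exact ⟨OrderIso.ofCmpEqCmp F G cmp_G_eq, fun a => (f a).2.1 _ (haF a)⟩

end DenseColoring

noncomputable def OrderIso.sigmaLexCongr {ι κ : Type*} [LinearOrder ι] [Preorder κ]
    {X : ι → Type*} {Z : κ → Type*} [∀ i, LinearOrder (X i)] [∀ k, Preorder (Z k)] (e : ι ≃o κ)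
    (F : ∀ i, X i ≃o Z (e i)) : (Σₗ i, X i) ≃o Σₗ k, Z k :=
  StrictMono.orderIsoOfSurjective
    (toLex ∘ Equiv.sigmaCongr e.toEquiv (fun i => (F i).toEquiv) ∘ ofLex)
    (by
      rintro ⟨i, x⟩ ⟨j, y⟩ (⟨_, _, h⟩ | ⟨_, _, h⟩)
      · exact Sigma.Lex.left _ _ (e.strictMono h)
      · exact Sigma.Lex.right _ _ ((F i).strictMono h))
    (toLex.surjective.comp ((Equiv.sigmaCongr _ _).surjective.comp ofLex.surjective))

noncomputable def OrderIso.sumLexIioSigmaLexIic {ι : Type*} [LinearOrder ι] (X : ι → Type*)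
    [∀ i, LinearOrder (X i)] (i : ι) (x : X i) :
    (Σₗ j : Iio i, X j) ⊕ₗ Iic x ≃o Iic (toLex ⟨i, x⟩ : Σₗ j, X j) :=
  StrictMono.orderIsoOfSurjective
    (fun s => Sum.elim
      (fun t : Σₗ j : Iio i, X j => ⟨toLex ⟨t.1.1, t.2⟩, Sigma.Lex.left _ _ t.1.2⟩)
      (fun y : Iic x => ⟨toLex ⟨i, y.1⟩, Sigma.Lex.right _ _ y.2⟩) (ofLex s))
    (by
      rintro _ _ (h | h | ⟨t, _⟩)
      · cases h with
        | left _ _ h => exact Sigma.Lex.left _ _ h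
        | right _ _ h => exact Sigma.Lex.right _ _ h
      · exact Sigma.Lex.right _ _ h
      · exact Sigma.Lex.left _ _ t.1.2)
    (by
      rintro ⟨⟨j, y⟩, ⟨_, _, h⟩ | ⟨_, _, h⟩⟩
      · exact ⟨toLex (.inl (toLex ⟨⟨j, h⟩, y⟩)), rfl⟩
      · exact ⟨toLex (.inr ⟨y, h⟩), rfl⟩)

theorem lowerOneTransitive_ratMixture_general
    {Q : Type*} [LinearOrder Q] [Countable Q] [NoMinOrder Q]
    {I : Type*} (c : Q → I)
    (hc : ∀ q q' : Q, q < q' → ∀ i : I, ∃ r : Q, q < r ∧ r < q' ∧ c r = i)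
    (Y : I → Type*) [∀ i, LinearOrder (Y i)]
    (hY : ∀ i j : I, LowerIsomorphic (Y i) (Y j)) :
    LowerOneTransitive (Σₗ (q : Q), Y (c q)) := by
  rintro ⟨q, y⟩ ⟨q', y'⟩
  have hc : IsDenseColoring c := hc
  have := hc.denselyOrdered
  have := (Order.IsSuccPrelimit.of_dense q).noMaxOrder_Iio
  have := (Order.IsSuccPrelimit.of_dense q').noMaxOrder_Iio
  obtain ⟨e, he⟩ := exists_orderIso_of_isDenseColoring (hc.restrict (Iio q)) (hc.restrict (Iio q'))
  obtain ⟨g⟩ := hY (c q) (c q') y y'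
  have F : ∀ r, Y (c r.1) ≃o Y (c (e r).1) := fun r => by rw [show c (e r).1 = c r.1 from he r]
  exact ⟨(OrderIso.sumLexIioSigmaLexIic (fun q => Y (c q)) q y).symm.trans <|
    ((OrderIso.sigmaLexCongr e F).sumLexCongr g).trans
      (OrderIso.sumLexIioSigmaLexIic (fun q => Y (c q)) q' y')⟩

/-- If `Q` is a countable dense-coloured linear order without endpoints with colours
in `I`, and `(Y i)` is a family of pairwise lower isomorphic linear orders, then the
lexicographic sum `Σₗ (q : Q), Y (c q)` (the order ℚ_n(Y₀, …) of the paper) is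
lower 1-transitive. -/
theorem lowerOneTransitive_ratMixture
    {Q : Type*} [LinearOrder Q] [Countable Q] [NoMinOrder Q] [NoMaxOrder Q]
    {I : Type*} [Nonempty I] (c : Q → I)
    (hc : ∀ q q' : Q, q < q' → ∀ i : I, ∃ r : Q, q < r ∧ r < q' ∧ c r = i)
    (Y : I → Type*) [∀ i, LinearOrder (Y i)]
    (hY : ∀ i j : I, LowerIsomorphic (Y i) (Y j)) :
    LowerOneTransitive (Σₗ (q : Q), Y (c q)) :=
  lowerOneTransitive_ratMixture_general c hc Y hY
end

section
/- Let (X, ≤) be any linear order and define x ∼fin y iff the closed interval between x and y (Icc x y if x ≤ y, Icc y x if y ≤ x) is finite. Then ∼fin is an equivalence relation and each of its equivalence classes, regarded as a suborder of X, is finite or order-isomorphic to ℕ (order type ω), to ℕᵒᵈ (order type ω*), or to ℤ. -/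
/-!
Finiteness of the interval between `x` and `y` is finiteness of `Set.uIcc x y`, and
`uIcc x z ⊆ uIcc x y ∪ uIcc y z` gives transitivity. All closed intervals inside a class are
finite, so an infinite class is a locally finite linear order. Such an order is generated by its
successor and predecessor maps, hence is determined by whether it has a least or a greatest
element: ℕ, ℕᵒᵈ or ℤ; having both would make it a single finite interval.
-/

def SimFin {X : Type*} [LinearOrder X] (x y : X) : Prop :=
  (x ≤ y ∧ (Set.Icc x y).Finite) ∨ (y ≤ x ∧ (Set.Icc y x).Finite)

section SimFin

variable {X : Type*} [LinearOrder X]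

theorem simFin_iff_finite_uIcc {x y : X} :
    SimFin x y ↔ (Set.uIcc x y).Finite := by
  rcases le_total x y with h | h
  · rw [Set.uIcc_of_le h]
    refine ⟨?_, fun hf => Or.inl ⟨h, hf⟩⟩
    rintro (⟨-, hf⟩ | ⟨h', hf⟩)
    · exact hf
    · rwa [le_antisymm h h'] at hf ⊢
  · rw [Set.uIcc_of_ge h]
    refine ⟨?_, fun hf => Or.inr ⟨h, hf⟩⟩
    rintro (⟨h', hf⟩ | ⟨-, hf⟩)
    · rwa [le_antisymm h h'] at hf ⊢
    · exact hf

theorem simFin_equivalence : Equivalence (SimFin (X := X)) where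
  refl x := simFin_iff_finite_uIcc.2 (by simp)
  symm {x y} h := simFin_iff_finite_uIcc.2 (Set.uIcc_comm x y ▸ simFin_iff_finite_uIcc.1 h)
  trans {x y z} hxy hyz := simFin_iff_finite_uIcc.2 <|
    ((simFin_iff_finite_uIcc.1 hxy).union (simFin_iff_finite_uIcc.1 hyz)).subset
      Set.uIcc_subset_uIcc_union_uIcc

theorem SimFin.finite_Icc {x y : X} (h : SimFin x y) :
    (Set.Icc x y).Finite :=
  (simFin_iff_finite_uIcc.1 h).subset Set.Icc_subset_uIcc

theorem finite_Icc_simFin_class (x : X) (a b : {y : X | SimFin y x}) : (Set.Icc a b).Finite :=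
  (simFin_equivalence.trans a.2 (simFin_equivalence.symm b.2)).finite_Icc.preimage
    Subtype.val_injective.injOn

end SimFin

namespace LinearLocallyFiniteOrder

variable {ι : Type*} [LinearOrder ι] [LocallyFiniteOrder ι]

theorem nonempty_orderIso_nat [OrderBot ι] [NoMaxOrder ι] : Nonempty (ι ≃o ℕ) :=
  letI := succOrder ι
  letI := predOrder ι
  ⟨orderIsoNatOfLinearSuccPredArch⟩

theorem nonempty_orderIso_natDual [OrderTop ι] [NoMinOrder ι] : Nonempty (ι ≃o ℕᵒᵈ) :=
  let ⟨e⟩ := nonempty_orderIso_nat (ι := ιᵒᵈ)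
  ⟨(OrderIso.dualDual ι).trans e.dual⟩

theorem nonempty_orderIso_int [NoMinOrder ι] [NoMaxOrder ι] [Nonempty ι] :
    Nonempty (ι ≃o ℤ) :=
  letI := succOrder ι
  letI := predOrder ι
  ⟨orderIsoIntOfLinearSuccPredArch⟩

theorem nonempty_orderIso_nat_or_natDual_or_int [Infinite ι] :
    Nonempty (ι ≃o ℕ) ∨ Nonempty (ι ≃o ℕᵒᵈ) ∨ Nonempty (ι ≃o ℤ) := by
  by_cases hmax : NoMaxOrder ι <;> by_cases hmin : NoMinOrder ι
  · exact .inr (.inr nonempty_orderIso_int)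
  · obtain ⟨b, hb⟩ : ∃ b : ι, ∀ y, b ≤ y := by simpa [noMinOrder_iff'] using hmin
    let : OrderBot ι := { bot := b, bot_le := hb }
    exact .inl nonempty_orderIso_nat
  · obtain ⟨t, ht⟩ : ∃ t : ι, ∀ y, y ≤ t := by simpa [noMaxOrder_iff'] using hmax
    let : OrderTop ι := { top := t, le_top := ht }
    exact .inr (.inl nonempty_orderIso_natDual)
  · obtain ⟨b, hb⟩ : ∃ b : ι, ∀ y, b ≤ y := by simpa [noMinOrder_iff'] using hmin
    obtain ⟨t, ht⟩ : ∃ t : ι, ∀ y, y ≤ t := by simpa [noMaxOrder_iff'] using hmax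
    exact absurd ((Set.finite_Icc b t).subset fun y _ => ⟨hb y, ht y⟩) Set.infinite_univ

end LinearLocallyFiniteOrder

/-- In any linear order, ∼fin is an equivalence relation and each class, as a
suborder, is finite or order-isomorphic to ℕ, ℕᵒᵈ or ℤ. -/
theorem simFin_classes (X : Type*) [LinearOrder X] :
    Equivalence (SimFin (X := X)) ∧
    ∀ x : X,
      ({y : X | SimFin y x}).Finite ∨
      Nonempty ({y : X | SimFin y x} ≃o ℕ) ∨
      Nonempty ({y : X | SimFin y x} ≃o ℕᵒᵈ) ∨
      Nonempty ({y : X | SimFin y x} ≃o ℤ) := by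
  refine ⟨simFin_equivalence, fun x => or_iff_not_imp_left.2 fun hinf => ?_⟩
  have : Infinite {y : X | SimFin y x} := Set.infinite_coe_iff.2 hinf
  let := LocallyFiniteOrder.ofFiniteIcc (finite_Icc_simFin_class x)
  exact LinearLocallyFiniteOrder.nonempty_orderIso_nat_or_natDual_or_int
end

section
/- Let (X, ≤) be a lower 1-transitive linear order and define x ∼fin y iff the closed interval between x and y is finite. Then each equivalence class of ∼fin, regarded as a suborder of X, is a singleton, or order-isomorphic to ℕᵒᵈ (order type ω*), or order-isomorphic to ℤ. Moreover, if some class is a singleton then every class is a singleton. -/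
open Set

theorem LinearOrder.nonempty_orderIso_natDual_or_int (ι : Type*) [LinearOrder ι]
    [LocallyFiniteOrder ι] [Nonempty ι] [NoMinOrder ι] :
    Nonempty (ι ≃o ℕᵒᵈ) ∨ Nonempty (ι ≃o ℤ) := by
  let := LinearLocallyFiniteOrder.succOrder ι
  let := LinearLocallyFiniteOrder.predOrder ι
  by_cases h : ∃ m : ι, IsTop m
  · obtain ⟨m, hm⟩ := h
    let : OrderTop ι := { top := m, le_top := hm }
    exact .inl ⟨(orderIsoNatOfLinearSuccPredArch (ι := ιᵒᵈ)).dual⟩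
  · push Not at h
    have : NoMaxOrder ι := ⟨fun a => (isTop_or_exists_gt a).resolve_left (h a)⟩
    exact .inr ⟨orderIsoIntOfLinearSuccPredArch⟩

theorem Set.OrdConnected.coe_covBy_coe_iff {X : Type*} [Preorder X] {s : Set X}
    (hs : s.OrdConnected) {a b : s} : (a : X) ⋖ b ↔ a ⋖ b :=
  Set.OrdConnected.apply_covBy_apply_iff (OrderEmbedding.subtype (· ∈ s)) (by simpa using hs)

theorem exists_covBy_of_lt_of_Icc_finite {X : Type*} [LinearOrder X] {y z : X} (h : y < z)
    (hf : (Icc y z).Finite) : ∃ w, w ⋖ z := by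
  obtain ⟨m, hm⟩ := (hf.subset Ico_subset_Icc_self).exists_maximal ⟨y, left_mem_Ico.2 h⟩
  exact ⟨m, hm.1.2, fun c hmc hcz => hmc.not_ge (hm.2 ⟨hm.1.1.trans hmc.le, hcz⟩ hmc.le)⟩

theorem LowerOneTransitive.exists_covBy {X : Type*} [LinearOrder X] (hX : LowerOneTransitive X)
    {w a : X} (hw : w ⋖ a) (b : X) : ∃ v, v ⋖ b := by
  obtain ⟨f⟩ := hX a b
  have hw_top : (⟨w, hw.le⟩ : Iic a) ⋖ ⊤ := ordConnected_Iic.coe_covBy_coe_iff.1 hw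
  have hfw_top : f ⟨w, hw.le⟩ ⋖ ⊤ := f.map_top ▸ (apply_covBy_apply_iff f).2 hw_top
  exact ⟨f ⟨w, hw.le⟩, ordConnected_Iic.coe_covBy_coe_iff.2 hfw_top⟩

namespace SimFin

variable {X : Type*} [LinearOrder X] {x y z : X}

theorem comm : SimFin x y ↔ SimFin y x := or_comm

theorem iff_uIcc_finite : SimFin x y ↔ (uIcc x y).Finite := by
  wlog h : x ≤ y generalizing x y
  · rw [comm, this (le_of_not_ge h), uIcc_comm]
  rw [uIcc_of_le h]
  refine ⟨?_, fun hf => .inl ⟨h, hf⟩⟩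
  rintro (⟨-, hf⟩ | ⟨hyx, -⟩)
  · exact hf
  · rw [le_antisymm h hyx, Icc_self]
    exact finite_singleton y

theorem refl (x : X) : SimFin x x := .inl ⟨le_rfl, by simp⟩

theorem symm (h : SimFin x y) : SimFin y x := comm.1 h

theorem trans (hxy : SimFin x y) (hyz : SimFin y z) : SimFin x z := by
  rw [iff_uIcc_finite] at *
  exact (hxy.union hyz).subset uIcc_subset_uIcc_union_uIcc

theorem of_covBy (h : x ⋖ y) : SimFin x y := .inl ⟨h.le, h.Icc_eq ▸ toFinite _⟩

theorem Icc_finite (h : SimFin x y) : (Icc x y).Finite :=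
  (iff_uIcc_finite.1 h).subset Icc_subset_uIcc

end SimFin

section simFinClass

variable {X : Type*} [LinearOrder X]

def simFinClass (x : X) : Set X := {y | SimFin y x}

noncomputable instance (x : X) : LocallyFiniteOrder (simFinClass x) :=
  LocallyFiniteOrder.ofFiniteIcc fun a b =>
    (a.2.trans b.2.symm).Icc_finite.preimage Subtype.val_injective.injOn

theorem simFinClass_eq_singleton_of_forall_not_covBy (h : ∀ w z : X, ¬ w ⋖ z) (x : X) :
    simFinClass x = {x} := by
  refine eq_singleton_iff_unique_mem.2 ⟨SimFin.refl x, fun y hy => ?_⟩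
  by_contra hne
  rcases lt_or_gt_of_ne hne with hlt | hlt
  · obtain ⟨w, hw⟩ := exists_covBy_of_lt_of_Icc_finite hlt hy.Icc_finite
    exact h w x hw
  · obtain ⟨w, hw⟩ := exists_covBy_of_lt_of_Icc_finite hlt hy.symm.Icc_finite
    exact h w y hw

theorem simFinClass_ne_singleton_of_covBy {w x : X} (h : w ⋖ x) : simFinClass x ≠ {x} :=
  fun hx => h.ne (hx ▸ SimFin.of_covBy h : w ∈ ({x} : Set X))

theorem noMinOrder_simFinClass (h : ∀ z : X, ∃ w, w ⋖ z) (x : X) :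
    NoMinOrder (simFinClass x) :=
  ⟨fun c => let ⟨w, hw⟩ := h c; ⟨⟨w, (SimFin.of_covBy hw).trans c.2⟩, hw.lt⟩⟩

end simFinClass

/-- In a lower 1-transitive linear order, each class of ∼fin is a singleton or
order-isomorphic to ℕᵒᵈ or to ℤ; if some class is a singleton then all are. -/
theorem simFin_classes_of_lowerOneTransitive {X : Type*} [LinearOrder X]
    (hX : LowerOneTransitive X) :
    (∀ x : X,
      {y : X | SimFin y x} = {x} ∨
      Nonempty ({y : X | SimFin y x} ≃o ℕᵒᵈ) ∨
      Nonempty ({y : X | SimFin y x} ≃o ℤ)) ∧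
    ((∃ x : X, {y : X | SimFin y x} = {x}) → ∀ x : X, {y : X | SimFin y x} = {x}) := by
  by_cases hpred : ∀ z : X, ∃ w, w ⋖ z
  · have hclass (x : X) :
        Nonempty (simFinClass x ≃o ℕᵒᵈ) ∨ Nonempty (simFinClass x ≃o ℤ) :=
      have := noMinOrder_simFinClass hpred x
      have : Nonempty (simFinClass x) := ⟨⟨x, SimFin.refl x⟩⟩
      LinearOrder.nonempty_orderIso_natDual_or_int _
    refine ⟨fun x => .inr (hclass x), fun ⟨x, hx⟩ => ?_⟩
    obtain ⟨w, hw⟩ := hpred x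
    exact absurd hx (simFinClass_ne_singleton_of_covBy hw)
  · have hnone : ∀ w z : X, ¬ w ⋖ z := by
      push Not at hpred
      obtain ⟨z₀, hz₀⟩ := hpred
      exact fun w z hw => let ⟨v, hv⟩ := hX.exists_covBy hw z₀; hz₀ v hv
    exact ⟨fun x => .inl (simFinClass_eq_singleton_of_forall_not_covBy hnone x),
      fun _ => simFinClass_eq_singleton_of_forall_not_covBy hnone⟩
end

section
/- Let (X, ≤) be a countable lower 1-transitive linear order with at least two elements, and suppose every class of ∼fin is a singleton (equivalently, for all x < y in X the closed interval [x, y] is infinite). Then X is densely ordered with no least element, and X is order-isomorphic to ℚ or to ℚ̇ = ℚ ⊕ₗ PUnit (the rationals with a greatest element adjoined). -/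
theorem denselyOrdered_of_Icc_infinite {X : Type*} [PartialOrder X]
    (h : ∀ x y : X, x < y → (Set.Icc x y).Infinite) : DenselyOrdered X := by
  refine ⟨fun x y hxy => ?_⟩
  by_contra! hgap
  have hsub : Set.Icc x y ⊆ {x, y} := by
    rintro z ⟨hxz, hzy⟩
    rcases hxz.eq_or_lt with rfl | hxz
    · exact .inl rfl
    · exact .inr (hzy.eq_of_not_lt (hgap z hxz))
  exact h x y hxy ((Set.toFinite {x, y}).subset hsub)

theorem LowerOneTransitive.noMinOrder {X : Type*} [LinearOrder X] [Nontrivial X]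
    (hX : LowerOneTransitive X) : NoMinOrder X := by
  refine ⟨fun a => ?_⟩
  by_contra! hmin
  obtain ⟨b, hba⟩ := exists_ne a
  obtain ⟨e⟩ := hX b a
  have : Subsingleton (Set.Iic a) :=
    ⟨fun x y => Subtype.ext <| (x.2.antisymm (hmin x)).trans (y.2.antisymm (hmin y)).symm⟩
  have hab : (⟨a, hmin b⟩ : Set.Iic b) = ⟨b, le_rfl⟩ := e.injective.subsingleton.elim _ _
  exact hba (congrArg Subtype.val hab).symm

section OrderTop

variable {X : Type*} [LinearOrder X] [OrderTop X]

instance [DenselyOrdered X] : DenselyOrdered {a : X // a ≠ ⊤} :=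
  ⟨fun a b hab => by
    obtain ⟨c, hac, hcb⟩ := exists_between (α := X) hab
    exact ⟨⟨c, (hcb.trans_le le_top).ne⟩, hac, hcb⟩⟩

instance [NoMinOrder X] : NoMinOrder {a : X // a ≠ ⊤} :=
  ⟨fun a => by
    obtain ⟨c, hca⟩ := exists_lt (a : X)
    exact ⟨⟨c, (hca.trans_le le_top).ne⟩, hca⟩⟩

instance [DenselyOrdered X] : NoMaxOrder {a : X // a ≠ ⊤} :=
  ⟨fun a => by
    obtain ⟨c, hac, hc⟩ := exists_between (lt_top_iff_ne_top.mpr a.2)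
    exact ⟨⟨c, hc.ne⟩, hac⟩⟩

theorem nonempty_orderIso_rat_sumLex_punit [Countable X] [DenselyOrdered X] [NoMinOrder X]
    [Nontrivial X] : Nonempty (X ≃o ℚ ⊕ₗ PUnit) := by
  classical
  have : Nonempty {a : X // a ≠ ⊤} := let ⟨b, hb⟩ := exists_ne (⊤ : X); ⟨⟨b, hb⟩⟩
  obtain ⟨e⟩ := Order.iso_of_countable_dense {a : X // a ≠ ⊤} ℚ
  exact ⟨WithTop.subtypeOrderIso.symm.trans (e.withTopCongr.trans WithTop.orderIsoSumLexPUnit)⟩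

end OrderTop

/-- A countable lower 1-transitive linear order with at least two elements in which
every closed interval between distinct points is infinite (all ∼fin classes are
singletons) is densely ordered without least element, and is order-isomorphic to ℚ
or to ℚ̇ = ℚ ⊕ₗ PUnit. -/
theorem lowerOneTransitive_dense_case {X : Type*} [LinearOrder X] [Countable X]
    [Nontrivial X] (hX : LowerOneTransitive X)
    (h : ∀ x y : X, x < y → (Set.Icc x y).Infinite) :
    DenselyOrdered X ∧ NoMinOrder X ∧
      (Nonempty (X ≃o ℚ) ∨ Nonempty (X ≃o (ℚ ⊕ₗ PUnit))) := by
  have := denselyOrdered_of_Icc_infinite h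
  have := hX.noMinOrder
  refine ⟨inferInstance, inferInstance, ?_⟩
  by_cases htop : ∃ m : X, IsTop m
  · obtain ⟨m, hm⟩ := htop
    let : OrderTop X := { top := m, le_top := hm }
    exact .inr nonempty_orderIso_rat_sumLex_punit
  · have : NoMaxOrder X := ⟨by simpa [IsTop] using htop⟩
    exact .inl (Order.iso_of_countable_dense X ℚ)
end

section
/- Let (T, ≤) be a partial order which is a tree in the sense that any two elements have a common lower bound and for each x ∈ T the set of lower bounds Iic x = {y : y ≤ x} is a chain, and suppose T is 1-transitive, i.e. for all a, b ∈ T there is an order automorphism f : T ≃o T with f a = b. Let B ⊆ T be a branch, i.e. a maximal chain of T. Then B, as a suborder, is lower 1-transitive: for all a, b ∈ B, the suborders {x ∈ B : x ≤ a} and {x ∈ B : x ≤ b} are order-isomorphic. -/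
/-- A branch of a 1-transitive tree is lower 1-transitive. Here a tree is a partial
order in which any two elements have a common lower bound and the lower bounds of any
element form a chain; 1-transitivity means the automorphism group acts transitively;
a branch is a maximal chain. -/
theorem branch_lowerOneTransitive {T : Type*} [PartialOrder T]
    (hlb : ∀ x y : T, ∃ z : T, z ≤ x ∧ z ≤ y)
    (hchain : ∀ x : T, IsChain (· ≤ ·) (Set.Iic x))
    (htrans : ∀ a b : T, ∃ f : T ≃o T, f a = b)
    (B : Set T) (hB : IsMaxChain (· ≤ ·) B) :
    ∀ a ∈ B, ∀ b ∈ B,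
      Nonempty ({x : T | x ∈ B ∧ x ≤ a} ≃o {x : T | x ∈ B ∧ x ≤ b}) := by
  have key : ∀ c ∈ B, {x : T | x ∈ B ∧ x ≤ c} = Set.Iic c := by
    intro c hc
    ext x
    simp only [Set.mem_setOf_eq, Set.mem_Iic]
    refine ⟨fun h => h.2, fun hx => ⟨?_, hx⟩⟩
    -- show x ∈ B using maximality
    have hins : IsChain (· ≤ ·) (insert x B) := by
      intro u hu v hv huv
      have comp : ∀ z ∈ B, z ≠ x → x ≤ z ∨ z ≤ x := by
        intro z hz hzx
        by_cases hzc : z ≤ c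
        · have := hchain c hx hzc (Ne.symm hzx)
          tauto
        · have : c ≤ z := by
            rcases eq_or_ne c z with rfl | hcz
            · exact le_refl _
            · rcases hB.1 hc hz hcz with h | h
              · exact h
              · exact absurd h hzc
          exact Or.inl (le_trans hx this)
      rcases hu with rfl | hu <;> rcases hv with rfl | hv
      · exact absurd rfl huv
      · exact comp v hv (Ne.symm huv)
      · exact (comp u hu huv).symm
      · exact hB.1 hu hv huv
    have := hB.2 hins (Set.subset_insert x B)
    rw [this]
    exact Set.mem_insert x B
  intro a ha b hb
  obtain ⟨f, hf⟩ := htrans a b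
  rw [key a ha, key b hb]
  refine ⟨{
    toFun := fun x => ⟨f x, by
      have : (x : T) ≤ a := x.2
      simpa [hf] using (f.le_iff_le.mpr this).trans_eq hf⟩
    invFun := fun y => ⟨f.symm y, by
      have : (y : T) ≤ b := y.2
      have := f.symm.le_iff_le.mpr this
      simpa [← hf] using this⟩
    left_inv := fun x => by simp
    right_inv := fun y => by simp
    map_rel_iff' := by intro x y; simp }⟩
end

section
/- The linear orders ℚ and ℚ̇ = ℚ ⊕ₗ PUnit (the rationals with a greatest element adjoined) are lower isomorphic: for every a ∈ ℚ and every b ∈ ℚ̇, the initial segments {x ∈ ℚ : x ≤ a} and {y ∈ ℚ̇ : y ≤ b} are order-isomorphic. -/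
/-- Translation order isomorphism between initial segments of ℚ. -/
def ratIicIso (a q : ℚ) : Set.Iic a ≃o Set.Iic q where
  toFun x := ⟨x.1 + (q - a), by have := x.2; simp only [Set.mem_Iic] at *; linarith⟩
  invFun y := ⟨y.1 + (a - q), by have := y.2; simp only [Set.mem_Iic] at *; linarith⟩
  left_inv x := by ext; simp; ring
  right_inv y := by ext; simp; ring
  map_rel_iff' := by simp

/-- The initial segment of `ℚ ⊕ₗ PUnit` at `toLex (Sum.inl q)` is isomorphic to `Set.Iic q`. -/
noncomputable def iicInlIso (q : ℚ) :
    Set.Iic q ≃o Set.Iic (toLex (Sum.inl q) : ℚ ⊕ₗ PUnit) := by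
  refine StrictMono.orderIsoOfSurjective
    (fun y => ⟨toLex (Sum.inl y.1), Sum.Lex.inl_le_inl_iff.2 y.2⟩) ?_ ?_
  · intro x y hxy
    exact Sum.Lex.inl_lt_inl_iff.2 hxy
  · rintro ⟨z, hz⟩
    rcases z with (x | u)
    · exact ⟨⟨x, Sum.Lex.inl_le_inl_iff.1 hz⟩, rfl⟩
    · exact absurd hz (by exact fun h => Sum.lex_inr_inl h)

/-- `Set.Iic a` in ℚ is order isomorphic to `ℚ ⊕ₗ PUnit`. -/
noncomputable def iicRatIso (a : ℚ) : Set.Iic a ≃o (ℚ ⊕ₗ PUnit) := by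
  have e : Set.Iio a ≃o ℚ := Nonempty.some (Order.iso_of_countable_dense _ _)
  refine StrictMono.orderIsoOfSurjective
    (fun x => if h : x.1 < a then toLex (Sum.inl (e ⟨x.1, h⟩)) else toLex (Sum.inr PUnit.unit))
    ?_ ?_
  · rintro ⟨x, hx⟩ ⟨y, hy⟩ hxy
    simp only at *
    have hxa : x < a := lt_of_lt_of_le hxy hy
    rw [dif_pos hxa]
    by_cases hya : y < a
    · rw [dif_pos hya]
      exact Sum.Lex.inl_lt_inl_iff.2 (e.strictMono hxy)
    · rw [dif_neg hya]
      exact Sum.Lex.sep _ _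
  · rintro (q | u)
    · refine ⟨⟨(e.symm q).1, Set.mem_Iic.2 (le_of_lt (e.symm q).2)⟩, ?_⟩
      simp only
      rw [dif_pos (show (e.symm q).1 < a from (e.symm q).2)]
      exact congrArg (fun r => toLex (Sum.inl r)) (e.apply_symm_apply q)
    · exact ⟨⟨a, Set.mem_Iic.2 le_rfl⟩, by
        cases u
        show (if h : a < a then toLex (Sum.inl (e ⟨a, h⟩)) else toLex (Sum.inr PUnit.unit)) = _
        rw [dif_neg (lt_irrefl a)]; rfl⟩

/-- `toLex (Sum.inr PUnit.unit)` is the top of `ℚ ⊕ₗ PUnit`, so its initial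
segment is everything. -/
noncomputable def iicInrIso :
    (ℚ ⊕ₗ PUnit) ≃o Set.Iic (toLex (Sum.inr PUnit.unit) : ℚ ⊕ₗ PUnit) := by
  exact StrictMono.orderIsoOfSurjective
    (fun z => ⟨z, Set.mem_Iic.2 (by
      rcases z with (x | ⟨⟩)
      · exact le_of_lt (Sum.Lex.sep _ _)
      · exact le_rfl)⟩)
    (fun x y h => h) (fun z => ⟨z.1, Subtype.ext rfl⟩)

/-- ℚ and ℚ̇ = ℚ ⊕ₗ PUnit are lower isomorphic. -/
theorem rat_lowerIsomorphic_ratDot : LowerIsomorphic ℚ (ℚ ⊕ₗ PUnit) := by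
  intro a b
  rcases b with (q | u)
  · exact ⟨(ratIicIso a q).trans (iicInlIso q)⟩
  · exact ⟨(iicRatIso a).trans iicInrIso⟩
end
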